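/- If affine hyperplanes H_1,...,H_m in F^n cover all of J(n,q), then m ≥ q. -/

import Mathlib

/-!
A polynomial of total degree `< q` that vanishes on `J(n, q)` is zero; the product of the `m`
affine forms is a nonzero polynomial of degree `≤ m` vanishing on `J(n, q)`, so `m ≥ q`.

The vanishing statement is proved by induction on `q` and `n`. Setting `x₀ = a₀` leaves a
polynomial in `n` variables vanishing on `J(n, q)` (prepend the smallest index), so it is zero and
`P = (x₀ - a₀) Q`. On the points of `J(n + 1, q)` avoiding the smallest index the factor
`x₀ - a₀` does not vanish, so `Q` vanishes on a copy of `J(n + 1, q - 1)` and has degree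
`< q - 1`.
-/

open MvPolynomial

namespace MvPolynomial

section CommSemiring

variable {R : Type*} [CommSemiring R] {n : ℕ}

theorem totalDegree_eval_C_finSuccEquiv_le (P : MvPolynomial (Fin (n + 1)) R) (y : R) :
    ((finSuccEquiv R n P).eval (C y)).totalDegree ≤ P.totalDegree := by
  rw [Polynomial.eval_eq_sum]
  refine totalDegree_finsetSum_le fun k hk => ?_
  calc ((finSuccEquiv R n P).coeff k * C y ^ k).totalDegree
      ≤ ((finSuccEquiv R n P).coeff k).totalDegree +
          (C y ^ k : MvPolynomial (Fin n) R).totalDegree := totalDegree_mul _ _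
    _ = ((finSuccEquiv R n P).coeff k).totalDegree := by rw [← map_pow, totalDegree_C, add_zero]
    _ ≤ P.totalDegree :=
        (Nat.le_add_right _ _).trans
          (totalDegree_coeff_finSuccEquiv_add_le P k (Polynomial.mem_support_iff.mp hk))

theorem eval_eval_C_finSuccEquiv (P : MvPolynomial (Fin (n + 1)) R) (y : R) (s : Fin n → R) :
    eval s ((finSuccEquiv R n P).eval (C y)) = eval (Fin.cons y s) P := by
  rw [eval_eq_eval_mv_eval', ← Polynomial.eval₂_hom, Polynomial.eval_map, eval_C]

end CommSemiring

section CommRing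

variable {R : Type*} [CommRing R] {n : ℕ}

theorem X_zero_sub_C_dvd_of_eval_finSuccEquiv_eq_zero {P : MvPolynomial (Fin (n + 1)) R} {y : R}
    (h : (finSuccEquiv R n P).eval (C y) = 0) : X 0 - C y ∣ P := by
  have hX : finSuccEquiv R n (X 0 - C y) = Polynomial.X - Polynomial.C (C y) := by
    simp [finSuccEquiv_apply]
  rw [← map_dvd_iff (finSuccEquiv R n), hX]
  exact Polynomial.dvd_iff_isRoot.mpr h

theorem totalDegree_X_sub_C [Nontrivial R] {σ : Type*} (i : σ) (y : R) :
    (X i - C y : MvPolynomial σ R).totalDegree = 1 := by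
  rw [sub_eq_add_neg, ← map_neg, totalDegree_add_eq_left_of_totalDegree_lt] <;>
    simp [totalDegree_X]

theorem X_sub_C_ne_zero [Nontrivial R] {σ : Type*} (i : σ) (y : R) :
    (X i - C y : MvPolynomial σ R) ≠ 0 := fun h => by
  simpa [h] using totalDegree_X_sub_C i y

end CommRing

section MonotoneGrid

variable {R : Type*} [CommRing R] {q n : ℕ}

/-- `P` vanishes on `J(n, q)`, the image under `a` of the non-decreasing tuples in `Fin q`. -/
def VanishesOnMonotone (a : Fin q → R) (P : MvPolynomial (Fin n) R) : Prop :=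
  ∀ w : Fin n → Fin q, Monotone w → eval (a ∘ w) P = 0

theorem VanishesOnMonotone.eval_C_finSuccEquiv {a : Fin (q + 1) → R}
    {P : MvPolynomial (Fin (n + 1)) R} (hP : VanishesOnMonotone a P) :
    VanishesOnMonotone a ((finSuccEquiv R n P).eval (C (a 0))) := by
  intro w hw
  have hcons : Monotone (Fin.cons 0 w : Fin (n + 1) → Fin (q + 1)) := by
    rw [monotone_iff_forall_lt]
    exact (Fin.liftFun_cons _).2 ⟨fun _ => Fin.zero_le _, monotone_iff_forall_lt.1 hw⟩
  rw [eval_eval_C_finSuccEquiv, ← Fin.comp_cons]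
  exact hP _ hcons

theorem VanishesOnMonotone.of_X_zero_sub_C_mul [IsDomain R] {a : Fin (q + 1) → R}
    (ha : Function.Injective a) {Q : MvPolynomial (Fin (n + 1)) R}
    (hQ : VanishesOnMonotone a ((X 0 - C (a 0)) * Q)) :
    VanishesOnMonotone (a ∘ Fin.succ) Q := by
  intro w hw
  have hfactor : eval (a ∘ Fin.succ ∘ w) (X 0 - C (a 0)) ≠ 0 := by
    simpa [sub_eq_zero] using ha.ne (Fin.succ_ne_zero (w 0))
  have := hQ (Fin.succ ∘ w) (Fin.strictMono_succ.monotone.comp hw)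
  rw [map_mul] at this
  exact (mul_eq_zero.mp this).resolve_left hfactor

theorem eq_zero_of_vanishesOnMonotone [IsDomain R] {a : Fin q → R} (ha : Function.Injective a)
    {P : MvPolynomial (Fin n) R} (hdeg : P.totalDegree < q) (hP : VanishesOnMonotone a P) :
    P = 0 := by
  induction q generalizing n with
  | zero => exact absurd hdeg (Nat.not_lt_zero _)
  | succ q ihq =>
  induction n with
  | zero =>
    have h := hP Fin.elim0 fun i => i.elim0
    rw [eq_C_of_isEmpty P, eval_C] at h
    rw [eq_C_of_isEmpty P, h, map_zero]
  | succ n ihn =>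
    have hsubst : (finSuccEquiv R n P).eval (C (a 0)) = 0 :=
      ihn ((totalDegree_eval_C_finSuccEquiv_le P _).trans_lt hdeg) hP.eval_C_finSuccEquiv
    obtain ⟨Q, rfl⟩ := X_zero_sub_C_dvd_of_eval_finSuccEquiv_eq_zero hsubst
    rcases eq_or_ne Q 0 with rfl | hQ
    · exact mul_zero _
    rw [totalDegree_mul_of_isDomain (X_sub_C_ne_zero _ _) hQ, totalDegree_X_sub_C] at hdeg
    rw [ihq (ha.comp (Fin.succ_injective q)) (by omega) (hP.of_X_zero_sub_C_mul ha), mul_zero]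

end MonotoneGrid

end MvPolynomial

theorem stmt_13_general {F : Type*} [Field F] (n q m : ℕ)
    (i : Fin q → F) (hi : Function.Injective i)
    (L : Fin m → MvPolynomial (Fin n) F)
    (hL : ∀ j, L j ≠ 0 ∧ (L j).totalDegree ≤ 1)
    (hcover : ∀ w : Fin n → Fin q, Monotone w →
      ∃ j, MvPolynomial.eval (fun t => i (w t)) (L j) = 0) :
    q ≤ m := by
  by_contra! hmq
  have hprod_ne : ∏ j, L j ≠ 0 := Finset.prod_ne_zero_iff.mpr fun j _ => (hL j).1
  have hdeg : (∏ j, L j).totalDegree < q :=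
    calc (∏ j, L j).totalDegree ≤ ∑ j, (L j).totalDegree := totalDegree_finsetProd _ _
      _ ≤ ∑ _j : Fin m, 1 := Finset.sum_le_sum fun j _ => (hL j).2
      _ < q := by simpa using hmq
  have hvan : VanishesOnMonotone i (∏ j, L j) := fun w hw => by
    obtain ⟨j, hj⟩ := hcover w hw
    rw [map_prod]
    exact Finset.prod_eq_zero (Finset.mem_univ j) hj
  exact hprod_ne (eq_zero_of_vanishesOnMonotone hi hdeg hvan)

theorem stmt_13 {F : Type*} [Field F] (n q m : ℕ) (hn : 1 ≤ n) (hq : 1 ≤ q)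
    (i : Fin q → F) (hi : Function.Injective i)
    (L : Fin m → MvPolynomial (Fin n) F)
    (hL : ∀ j, L j ≠ 0 ∧ (L j).totalDegree ≤ 1)
    (hcover : ∀ w : Fin n → Fin q, Monotone w →
      ∃ j, MvPolynomial.eval (fun t => i (w t)) (L j) = 0) :
    q ≤ m :=
  stmt_13_general n q m i hi L hL hcover
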